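/- arXiv:2310.03736 — 2 statements merged into one kernel-verified Lean document; each statement's English description precedes it below -/
import Mathlib

section
/- A linear order ◁ on V satisfies a set C of NB constraints if and only if the tournament on V induced by ◁ (with edge i → j iff i ◁ j) is an acyclic orientation obtained from the edge sets S_1,...,S_k of the complementary pairs partition by choosing, for each S_i, either its given orientation or its full reversal. -/
/-- A non-betweenness constraint `(i, j, k)` is satisfied by a strict order `r`
if `j` is not strictly between `i` and `k`. -/
def nbSat {V : Type*} (r : V → V → Prop) (c : V × V × V) : Prop :=
  ¬ (r c.1 c.2.1 ∧ r c.2.1 c.2.2) ∧ ¬ (r c.2.2 c.2.1 ∧ r c.2.1 c.1)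

/-- Ordered pairs of distinct elements: the vertices of the formula graph. -/
abbrev Pairs (V : Type*) := {p : V × V // p.1 ≠ p.2}

/-- The complementary (reversed) vertex. -/
def pswap {V : Type*} (u : Pairs V) : Pairs V := ⟨(u.1.2, u.1.1), u.2.symm⟩

/-- Adjacency in the formula graph `G_C`. -/
def FGAdj {V : Type*} (C : Set (V × V × V)) (u v : Pairs V) : Prop :=
  ∃ c ∈ C, (u.1 = (c.1, c.2.1) ∧ v.1 = (c.2.2, c.2.1)) ∨
           (u.1 = (c.2.1, c.1) ∧ v.1 = (c.2.1, c.2.2))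

/-- `S` is a connected component of the formula graph. -/
def IsComp {V : Type*} (C : Set (V × V × V)) (S : Set (Pairs V)) : Prop :=
  ∃ u, S = {v | Relation.EqvGen (FGAdj C) u v}

/-!
Under a strict total order, `j` is not between `i` and `k` exactly when the pairs `(i, j)` and
`(k, j)` are oriented alike; reversing both pairs preserves this. Hence `r` satisfies `C` iff
adjacent vertices of the formula graph are oriented alike, iff each connected component `S_i` is
oriented uniformly, since every edge of the graph lies in some `S_i` or in its mirror image.
-/

section

variable {V : Type*}

def SameDirection (r : V → V → Prop) (u v : Pairs V) : Prop :=
  r u.1.1 u.1.2 ↔ r v.1.1 v.1.2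

theorem FGAdj.pswap {C : Set (V × V × V)} {u v : Pairs V} (h : FGAdj C u v) :
    FGAdj C (pswap u) (pswap v) := by
  obtain ⟨c, hc, ⟨hu, hv⟩ | ⟨hu, hv⟩⟩ := h
  · exact ⟨c, hc, Or.inr ⟨congrArg Prod.swap hu, congrArg Prod.swap hv⟩⟩
  · exact ⟨c, hc, Or.inl ⟨congrArg Prod.swap hu, congrArg Prod.swap hv⟩⟩

theorem IsComp.mem_of_fgAdj {C : Set (V × V × V)} {S : Set (Pairs V)} (hS : IsComp C S)
    {u v : Pairs V} (hu : u ∈ S) (huv : FGAdj C u v) : v ∈ S := by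
  obtain ⟨u₀, rfl⟩ := hS
  exact hu.trans _ _ _ (.rel _ _ huv)

theorem IsComp.sameDirection {r : V → V → Prop} {C : Set (V × V × V)} {S : Set (Pairs V)}
    (hS : IsComp C S) (hadj : ∀ u v, FGAdj C u v → SameDirection r u v) {u v : Pairs V}
    (hu : u ∈ S) (hv : v ∈ S) : SameDirection r u v := by
  obtain ⟨u₀, rfl⟩ := hS
  have hequiv : Equivalence (SameDirection r) :=
    ⟨fun _ => Iff.rfl, Iff.symm, Iff.trans⟩
  have hgen := (hu.symm _ _).trans _ _ _ hv
  exact hequiv.eqvGen_iff.1 (hgen.mono hadj)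

section StrictTotalOrder

variable {r : V → V → Prop} [IsStrictTotalOrder V r]

theorem rel_swap_iff_not_rel {a b : V} (hab : a ≠ b) : r b a ↔ ¬ r a b := by
  refine ⟨fun hba hab => asymm hab hba, fun h => ?_⟩
  rcases trichotomous_of r a b with h' | h' | h'
  exacts [absurd h' h, absurd h' hab, h']

theorem sameDirection_pswap_iff {u v : Pairs V} :
    SameDirection r (pswap u) (pswap v) ↔ SameDirection r u v := by
  simp only [SameDirection, pswap, rel_swap_iff_not_rel u.2, rel_swap_iff_not_rel v.2,
    not_iff_not]

theorem nbSat_iff (c : V × V × V) (h₁ : c.1 ≠ c.2.1) (h₂ : c.2.1 ≠ c.2.2) :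
    nbSat r c ↔ (r c.1 c.2.1 ↔ r c.2.2 c.2.1) := by
  simp only [nbSat, rel_swap_iff_not_rel h₁, rel_swap_iff_not_rel h₂.symm]
  tauto

theorem forall_nbSat_iff_forall_fgAdj {C : Set (V × V × V)}
    (hC : ∀ c ∈ C, c.1 ≠ c.2.1 ∧ c.2.1 ≠ c.2.2 ∧ c.1 ≠ c.2.2) :
    (∀ c ∈ C, nbSat r c) ↔ ∀ u v, FGAdj C u v → SameDirection r u v := by
  refine ⟨fun h u v ⟨c, hc, huv⟩ => ?_, fun h c hc => ?_⟩
  · obtain ⟨h₁, h₂, -⟩ := hC c hc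
    have hsame := (nbSat_iff c h₁ h₂).1 (h c hc)
    obtain ⟨hu, hv⟩ | ⟨hu, hv⟩ := huv
    · simpa only [SameDirection, hu, hv] using hsame
    · rw [← sameDirection_pswap_iff]
      simpa only [SameDirection, pswap, hu, hv] using hsame
  · obtain ⟨h₁, h₂, -⟩ := hC c hc
    exact (nbSat_iff c h₁ h₂).2 (h ⟨_, h₁⟩ ⟨_, h₂.symm⟩ ⟨c, hc, Or.inl ⟨rfl, rfl⟩⟩)

theorem uniformlyOriented_iff {S : Set (Pairs V)} :
    ((∀ u ∈ S, r u.1.1 u.1.2) ∨ (∀ u ∈ S, r u.1.2 u.1.1)) ↔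
      ∀ u ∈ S, ∀ v ∈ S, SameDirection r u v := by
  simp only [SameDirection]
  refine ⟨fun h u hu v hv => ?_, fun h => ?_⟩
  · rcases h with h | h
    · exact iff_of_true (h u hu) (h v hv)
    · exact iff_of_false ((rel_swap_iff_not_rel u.2).1 (h u hu))
        ((rel_swap_iff_not_rel v.2).1 (h v hv))
  · by_cases hfwd : ∀ u ∈ S, r u.1.1 u.1.2
    · exact .inl hfwd
    · push Not at hfwd
      obtain ⟨u₀, hu₀, hback⟩ := hfwd
      exact .inr fun v hv =>
        (rel_swap_iff_not_rel v.2).2 fun hv' => hback ((h u₀ hu₀ v hv).2 hv')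

end StrictTotalOrder

end

theorem stmt6_general {V : Type*} (C : Set (V × V × V))
    (hC : ∀ c ∈ C, c.1 ≠ c.2.1 ∧ c.2.1 ≠ c.2.2 ∧ c.1 ≠ c.2.2)
    (k : ℕ) (S : Fin k → Set (Pairs V))
    (hcomp : ∀ i, IsComp C (S i))
    (hpart : ∀ u : Pairs V, ∃! i, u ∈ S i ∪ pswap '' S i)
    (r : V → V → Prop) (hr : IsStrictTotalOrder V r) :
    (∀ c ∈ C, nbSat r c) ↔
    ∀ i, (∀ u ∈ S i, r u.1.1 u.1.2) ∨ (∀ u ∈ S i, r u.1.2 u.1.1) := by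
  simp only [forall_nbSat_iff_forall_fgAdj hC, uniformlyOriented_iff]
  refine ⟨fun h i _ hu _ hv => (hcomp i).sameDirection h hu hv, fun h u v huv => ?_⟩
  obtain ⟨m, hm, -⟩ := hpart u
  rcases hm with hu | ⟨w, hw, rfl⟩
  · exact h m u hu v ((hcomp m).mem_of_fgAdj hu huv)
  · exact sameDirection_pswap_iff.1 (h m w hw _ ((hcomp m).mem_of_fgAdj hw huv.pswap))

/-- a linear order `r` satisfies the NB constraints `C` iff, viewing each edge
set `S_i` of the complementary pairs partition as directed edges, the tournament induced by
`r` orients each `S_i` either entirely as given or entirely reversed (i.e. it is an acyclic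
orientation of the edge sets). -/
theorem stmt6 {V : Type*} [Fintype V] (C : Set (V × V × V))
    (hC : ∀ c ∈ C, c.1 ≠ c.2.1 ∧ c.2.1 ≠ c.2.2 ∧ c.1 ≠ c.2.2)
    (k : ℕ) (S : Fin k → Set (Pairs V))
    (hcomp : ∀ i, IsComp C (S i))
    (hdisj : ∀ i, Disjoint (S i) (pswap '' S i))
    (hpart : ∀ u : Pairs V, ∃! i, u ∈ S i ∪ pswap '' S i)
    (r : V → V → Prop) (hr : IsStrictTotalOrder V r) :
    (∀ c ∈ C, nbSat r c) ↔
    ∀ i, (∀ u ∈ S i, r u.1.1 u.1.2) ∨ (∀ u ∈ S i, r u.1.2 u.1.1) :=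
  stmt6_general C hC k S hcomp hpart r hr
end

section
/- For every n ≥ 4 and for each voter i of the cyclic approval profile P_n, the NB constraints induced by P_n include (j, i, j+1) for every j ∉ {i, i−1} (indices mod n); consequently every voter must be placed first or last in any satisfying linear order, which is impossible for n ≥ 4. -/
/-- Voter `v` strictly prefers candidate `a` to `b`: approves `a` but not `b`. -/
def Pref {m n : ℕ} (P : Fin m → Fin n → Bool) (v : Fin n) (a b : Fin m) : Prop :=
  P a v = true ∧ P b v = false

/-- The set of NB constraints induced by an approval profile. -/
def CP {m n : ℕ} (P : Fin m → Fin n → Bool) : Set (Fin n × Fin n × Fin n) :=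
  {t | ∃ a b, Pref P t.1 a b ∧ Pref P t.2.1 b a ∧ Pref P t.2.2 a b}

/-- The cyclic approval profile `P_n`: voter `v` approves exactly candidates `v` and
`v - 1` (modulo `n`). -/
def Pn (n : ℕ) : Fin n → Fin n → Bool :=
  fun c v => decide ((v : ℕ) = c ∨ (v : ℕ) = (c + 1) % n)

/-!
Voters `j` and `j + 1` both approve candidate `j`, which voter `i` rejects when `j ∉ {i, i - 1}`;
voter `i` approves a candidate (`i`, or `i - 1` when `j = i + 1`) that both `j` and `j + 1` reject.
This induces the constraint `(j, i, j + 1)`, so consecutive voters other than `i` lie on the same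
side of `i`, and walking around the cycle from `i + 1` to `i - 1` puts every other voter on one side
of `i`. But a strict order has only one least and one greatest element, so three voters cannot all
be extreme.
-/

namespace Fin

open Fin.CommRing

variable {n : ℕ} [NeZero n]

theorem val_add_one_eq_mod (j : Fin n) : ((j + 1 : Fin n) : ℕ) = (j + 1) % n := by
  rw [Fin.val_add, Fin.val_one', Nat.add_mod_mod]

theorem val_sub_one_eq_mod (i : Fin n) : ((i - 1 : Fin n) : ℕ) = (i + n - 1) % n := by
  rcases Nat.lt_or_ge n 2 with hn | hn
  · obtain rfl : n = 1 := by have := NeZero.pos n; omega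
    simp
  · rw [Fin.val_sub, Fin.val_one', Nat.mod_eq_of_lt hn]
    congr 1
    omega

theorem add_natCast_ne_self (i : Fin n) {k : ℕ} (hk₀ : 0 < k) (hkn : k < n) :
    i + (k : Fin n) ≠ i := by
  rw [Ne, add_eq_left, Fin.natCast_eq_zero]
  exact Nat.not_dvd_of_pos_of_lt hk₀ hkn

theorem forall_ne_of_succ {i : Fin n} {P : Fin n → Prop} (hstart : P (i + 1))
    (hstep : ∀ j, j ≠ i → j + 1 ≠ i → P j → P (j + 1)) : ∀ j, j ≠ i → P j := by
  have hpath : ∀ k : ℕ, k + 2 ≤ n → P (i + 1 + (k : Fin n)) := by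
    intro k
    induction k with
    | zero => exact fun _ => by simpa using hstart
    | succ k ih =>
      intro hk
      have hcur : i + 1 + (k : Fin n) = i + ((k + 1 : ℕ) : Fin n) := by push_cast; ring
      have hnext : i + 1 + ((k + 1 : ℕ) : Fin n) = i + 1 + (k : Fin n) + 1 := by push_cast; ring
      rw [hnext]
      refine hstep _ ?_ ?_ (ih (by omega))
      · rw [hcur]; exact add_natCast_ne_self i (by omega) (by omega)
      · rw [hcur, add_assoc, ← Nat.cast_add_one]
        exact add_natCast_ne_self i (by omega) (by omega)
  intro j hj
  set k := ((j - (i + 1) : Fin n) : ℕ) with hk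
  have hj_eq : j = i + 1 + (k : Fin n) := by rw [hk, Fin.cast_val_eq_self]; ring
  have hk_ne : k + 1 ≠ n := by
    intro h
    apply hj
    rw [hj_eq, add_assoc, add_comm (1 : Fin n), ← Nat.cast_add_one, h, Fin.natCast_self, add_zero]
  rw [hj_eq]
  exact hpath k (by have := Fin.is_lt (j - (i + 1)); omega)

end Fin

section NonBetweenness

variable {α : Type*} {r : α → α → Prop} [Std.Trichotomous r] {a i b : α}

theorem rel_of_nbSat_of_rel (h : nbSat r (a, i, b)) (hb : b ≠ i) (ha : r a i) : r b i := by
  rcases trichotomous (r := r) b i with hbi | hbi | hib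
  · exact hbi
  · exact absurd hbi hb
  · exact absurd ⟨ha, hib⟩ h.1

theorem rel_of_nbSat_of_rel' (h : nbSat r (a, i, b)) (hb : b ≠ i) (ha : r i a) : r i b := by
  rcases trichotomous (r := r) i b with hib | hib | hbi
  · exact hib
  · exact absurd hib.symm hb
  · exact absurd ⟨hbi, ha⟩ h.2

end NonBetweenness

theorem eq_of_forall_ne_rel {α : Type*} {r : α → α → Prop} [Std.Asymm r] {x y : α}
    (hx : ∀ j, j ≠ x → r x j) (hy : ∀ j, j ≠ y → r y j) : x = y :=
  by_contra fun hxy => asymm (hx y (Ne.symm hxy)) (hy x hxy)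

theorem not_forall_extreme {α : Type*} {r : α → α → Prop} [Std.Asymm r] {a b c : α}
    (hab : a ≠ b) (hac : a ≠ c) (hbc : b ≠ c) :
    ¬ ∀ i, (∀ j, j ≠ i → r i j) ∨ (∀ j, j ≠ i → r j i) := by
  intro h
  rcases h a with ha | ha <;> rcases h b with hb | hb <;> rcases h c with hc | hc <;>
    first
    | exact hab (eq_of_forall_ne_rel ha hb)
    | exact hac (eq_of_forall_ne_rel ha hc)
    | exact hbc (eq_of_forall_ne_rel hb hc)
    | exact hab (eq_of_forall_ne_rel (r := fun x y => r y x) ha hb)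
    | exact hac (eq_of_forall_ne_rel (r := fun x y => r y x) ha hc)
    | exact hbc (eq_of_forall_ne_rel (r := fun x y => r y x) hb hc)

section CyclicProfile

open Fin.CommRing

variable {n : ℕ} [NeZero n]

theorem Pn_eq_true_iff {c v : Fin n} : Pn n c v = true ↔ v = c ∨ v = c + 1 := by
  simp [Pn, Fin.ext_iff, Fin.val_add_one_eq_mod]

theorem pref_Pn_iff {v a b : Fin n} :
    Pref (Pn n) v a b ↔ (v = a ∨ v = a + 1) ∧ ¬ (v = b ∨ v = b + 1) := by
  simp only [Pref, ← Pn_eq_true_iff, Bool.not_eq_true]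

theorem mem_CP_Pn (hn : 4 ≤ n) {i j : Fin n} (hji : j ≠ i) (hj : j + 1 ≠ i) :
    (j, i, j + 1) ∈ CP (Pn n) := by
  have h2 : (2 : Fin n) ≠ 0 := by simp [Fin.ext_iff, Nat.mod_eq_of_lt (by omega : 2 < n)]
  have h3 : (3 : Fin n) ≠ 0 := by simp [Fin.ext_iff, Nat.mod_eq_of_lt (by omega : 3 < n)]
  by_cases hij : j = i + 1
  -- Candidate `i` is approved by voter `j = i + 1`, so voter `i` is separated by `i - 1` instead.
  · subst hij
    have h₁ : i + 1 ≠ i - 1 := fun h => h2 (by linear_combination h)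
    have h₂ : i ≠ i + 1 + 1 := fun h => h2 (by linear_combination -h)
    have h₃ : i + 1 + 1 ≠ i - 1 := fun h => h3 (by linear_combination h)
    have h₄ : i + 1 + 1 ≠ i := fun h => h2 (by linear_combination h)
    refine ⟨i + 1, i - 1, ?_, ?_, ?_⟩ <;>
      simp [pref_Pn_iff, h₁, h₂, h₃, h₄, hji, hji.symm]
  · have hj' : j + 1 ≠ i + 1 := by simpa using hji
    refine ⟨j, i, ?_, ?_, ?_⟩ <;> simp [pref_Pn_iff, hji, hij, hji.symm, hj, hj.symm, hj']

theorem forall_rel_or_forall_rel_of_nbSat_CP_Pn (hn : 4 ≤ n) {r : Fin n → Fin n → Prop}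
    [Std.Trichotomous r] (hsat : ∀ c ∈ CP (Pn n), nbSat r c) (i : Fin n) :
    (∀ j, j ≠ i → r i j) ∨ (∀ j, j ≠ i → r j i) := by
  have hsat' : ∀ j, j ≠ i → j + 1 ≠ i → nbSat r (j, i, j + 1) :=
    fun j hji hj => hsat _ (mem_CP_Pn hn hji hj)
  have hsucc : i + 1 ≠ i := by simpa using Fin.add_natCast_ne_self i (k := 1) one_pos (by omega)
  rcases trichotomous (r := r) (i + 1) i with h | h | h
  · exact .inr <| Fin.forall_ne_of_succ h fun j hji hj hr =>
      rel_of_nbSat_of_rel (hsat' j hji hj) hj hr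
  · exact absurd h hsucc
  · exact .inl <| Fin.forall_ne_of_succ h fun j hji hj hr =>
      rel_of_nbSat_of_rel' (hsat' j hji hj) hj hr

end CyclicProfile

/-- for `n ≥ 4`, the NB constraints induced by `P_n` include `(j, i, j+1)`
for every `j ∉ {i, i-1}` (indices modulo `n`); consequently, in any satisfying linear
order every voter is placed first or last, which is impossible. -/
theorem stmt17 (n : ℕ) (hn : 4 ≤ n) :
    (∀ i j : Fin n, j ≠ i → (j : ℕ) ≠ ((i : ℕ) + n - 1) % n →
      (j, i, (⟨((j : ℕ) + 1) % n, Nat.mod_lt _ (by omega)⟩ : Fin n)) ∈ CP (Pn n)) ∧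
    (∀ r : Fin n → Fin n → Prop, IsStrictTotalOrder (Fin n) r →
      (∀ c ∈ CP (Pn n), nbSat r c) →
      ∀ i : Fin n, (∀ j, j ≠ i → r i j) ∨ (∀ j, j ≠ i → r j i)) ∧
    ¬ ∃ r : Fin n → Fin n → Prop, IsStrictTotalOrder (Fin n) r ∧
        ∀ c ∈ CP (Pn n), nbSat r c := by
  have : NeZero n := ⟨by omega⟩
  open Fin.CommRing in
  have hsucc (j : Fin n) : (⟨((j : ℕ) + 1) % n, Nat.mod_lt _ (by omega)⟩ : Fin n) = j + 1 :=
    Fin.ext (Fin.val_add_one_eq_mod j).symm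
  open Fin.CommRing in
  have hpred (i j : Fin n) (hj : (j : ℕ) ≠ ((i : ℕ) + n - 1) % n) : j + 1 ≠ i := by
    rintro rfl
    rw [← Fin.val_sub_one_eq_mod, add_sub_cancel_right] at hj
    exact hj rfl
  have extreme (r : Fin n → Fin n → Prop) (hr : IsStrictTotalOrder (Fin n) r)
      (hsat : ∀ c ∈ CP (Pn n), nbSat r c) (i : Fin n) :
      (∀ j, j ≠ i → r i j) ∨ (∀ j, j ≠ i → r j i) :=
    forall_rel_or_forall_rel_of_nbSat_CP_Pn hn hsat i
  refine ⟨fun i j hji hj => hsucc j ▸ mem_CP_Pn hn hji (hpred i j hj), extreme, ?_⟩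
  rintro ⟨r, hr, hsat⟩
  exact not_forall_extreme (r := r) (a := ⟨0, by omega⟩) (b := ⟨1, by omega⟩)
    (c := ⟨2, by omega⟩) (by simp) (by simp) (by simp) (extreme r hr hsat)
end
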